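/- Let M' be a minor of a matroid M, let C' be a circuit of M' and D' a cocircuit of M'. Then there is a circuit C of M with C ⊆ C' ∪ (E(M) \ E(M')) and a cocircuit D of M with D ⊆ D' ∪ (E(M) \ E(M')) such that C ∩ D = C' ∩ D'. -/

import Mathlib

open Set

namespace Matroid

variable {α : Type*}

/-- A circuit of a matroid is a minimal dependent set. -/
def Circuit (M : Matroid α) (C : Set α) : Prop :=
  M.Dep C ∧ ∀ D, M.Dep D → D ⊆ C → D = C

/-- A cocircuit is a circuit of the dual matroid. -/
def Cocircuit (M : Matroid α) (D : Set α) : Prop := M✶.Circuit D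

/-- The matroid obtained by deleting the set `D`. -/
def delete₀ (M : Matroid α) (D : Set α) : Matroid α := M ↾ (M.E \ D)

/-- The matroid obtained by contracting the set `C`. -/
def contract₀ (M : Matroid α) (C : Set α) : Matroid α := ((M✶).delete₀ C)✶

/-- `N` is a minor of `M` if it is obtained from `M` by contracting a set `C`
and deleting a set `D`, where `C` and `D` are disjoint subsets of the ground set. -/
def IsMinor₀ (N M : Matroid α) : Prop :=
  ∃ C D, Disjoint C D ∧ C ∪ D ⊆ M.E ∧ N = (M.contract₀ C).delete₀ D

/-- A scrawl is a union of circuits. -/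
def Scrawl (M : Matroid α) (W : Set α) : Prop :=
  ∃ S : Set (Set α), (∀ C ∈ S, M.Circuit C) ∧ W = ⋃₀ S

/-- A matroid is tame if every circuit-cocircuit intersection is finite. -/
def Tame (M : Matroid α) : Prop :=
  ∀ C D, M.Circuit C → M.Cocircuit D → (C ∩ D).Finite

/-- A `k`-painting of a matroid: nonzero coefficients on each circuit and each
cocircuit such that each circuit-cocircuit pair is "orthogonal". -/
def IsPainting {k : Type*} [Field k] (M : Matroid α)
    (c : Set α → α → k) (d : Set α → α → k) : Prop :=
  (∀ C, M.Circuit C → ∀ e ∈ C, c C e ≠ 0) ∧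
  (∀ D, M.Cocircuit D → ∀ e ∈ D, d D e ≠ 0) ∧
  (∀ C D, M.Circuit C → M.Cocircuit D →
    (C ∩ D).Finite ∧ ∑ᶠ e ∈ C ∩ D, c C e * d D e = 0)

end Matroid

/-!
Extend `C'` to a circuit of `M` inside `C' ∪ K` and, dually, `D'` to a cocircuit of `M` inside
`D' ∪ L`. Since `C'` and `D'` avoid `K ∪ L` and `K`, `L` are disjoint, the new elements of the
circuit and of the cocircuit never meet, so the intersection is unchanged.
-/

open Set

namespace Matroid

variable {α : Type*} {M : Matroid α} {C D K L : Set α}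

lemma circuit_iff_isCircuit : M.Circuit C ↔ M.IsCircuit C := by
  rw [isCircuit_iff]
  rfl

lemma cocircuit_iff_isCocircuit : M.Cocircuit D ↔ M.IsCocircuit D :=
  circuit_iff_isCircuit

lemma contract₀_delete₀_eq (M : Matroid α) (K L : Set α) :
    (M.contract₀ K).delete₀ L = M ／ K ＼ L := rfl

lemma IsCocircuit.exists_subset_isCocircuit_of_delete (hD : (M ＼ L).IsCocircuit D) :
    ∃ D₀, M.IsCocircuit D₀ ∧ D ⊆ D₀ ∧ D₀ ⊆ D ∪ L := by
  rw [isCocircuit_def, dual_delete] at hD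
  exact hD.exists_subset_isCircuit_of_contract

theorem exists_isCircuit_isCocircuit_inter_eq_of_contract_delete (hKL : Disjoint K L)
    (hC : (M ／ K ＼ L).IsCircuit C) (hD : (M ／ K ＼ L).IsCocircuit D) :
    ∃ C₀ D₀, M.IsCircuit C₀ ∧ M.IsCocircuit D₀ ∧ C₀ ⊆ C ∪ K ∧ D₀ ⊆ D ∪ L ∧
      C₀ ∩ D₀ = C ∩ D := by
  obtain ⟨C₀, hC₀, hCC₀, hC₀C⟩ := hC.of_delete.exists_subset_isCircuit_of_contract
  obtain ⟨D₀, hD₀, hDD₀, hD₀D⟩ := hD.exists_subset_isCocircuit_of_delete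
  have hCE : C ⊆ (M.E \ K) \ L := hC.subset_ground
  have hDE : D ⊆ (M.E \ K) \ L := hD.subset_ground
  refine ⟨C₀, D₀, hC₀, hD₀.of_contract, hC₀C, hD₀D,
    (inter_subset_inter hCC₀ hDD₀).antisymm' ?_⟩
  rintro x ⟨hxC₀, hxD₀⟩
  rcases hC₀C hxC₀ with hxC | hxK <;> rcases hD₀D hxD₀ with hxD | hxL
  · exact ⟨hxC, hxD⟩
  · exact absurd hxL (hCE hxC).2
  · exact absurd hxK (hDE hxD).1.2
  · exact absurd hxL (hKL.notMem_of_mem_left hxK)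

end Matroid

/-- A circuit and a cocircuit of a minor extend to a circuit and a cocircuit of the
whole matroid with the same intersection. -/
theorem stmt4 {α : Type*} (M M' : Matroid α) (hM' : M'.IsMinor₀ M)
    (C' : Set α) (hC' : M'.Circuit C') (D' : Set α) (hD' : M'.Cocircuit D') :
    ∃ C D, M.Circuit C ∧ M.Cocircuit D ∧
      C ⊆ C' ∪ (M.E \ M'.E) ∧ D ⊆ D' ∪ (M.E \ M'.E) ∧ C ∩ D = C' ∩ D' := by
  obtain ⟨K, L, hKL, hKLE, rfl⟩ := hM'
  rw [Matroid.contract₀_delete₀_eq] at hC' hD' ⊢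
  rw [Matroid.circuit_iff_isCircuit] at hC'
  rw [Matroid.cocircuit_iff_isCocircuit] at hD'
  obtain ⟨C, D, hC, hD, hCC', hDD', hCD⟩ :=
    Matroid.exists_isCircuit_isCocircuit_inter_eq_of_contract_delete hKL hC' hD'
  have hK : K ⊆ M.E \ ((M.E \ K) \ L) := fun x hx ↦ ⟨hKLE (.inl hx), fun h ↦ h.1.2 hx⟩
  have hL : L ⊆ M.E \ ((M.E \ K) \ L) := fun x hx ↦ ⟨hKLE (.inr hx), fun h ↦ h.2 hx⟩
  exact ⟨C, D, Matroid.circuit_iff_isCircuit.2 hC, Matroid.cocircuit_iff_isCocircuit.2 hD,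
    hCC'.trans (union_subset_union_right _ hK), hDD'.trans (union_subset_union_right _ hL), hCD⟩
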